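/- Let u, ω : 𝕋 × ℝ → ℝ² and ℝ respectively with u = ∇⊥Δ⁻¹ω, ω having zero x-average, smooth and rapidly decaying. Then ‖u‖_{L²} ≤ C‖ω‖_X for an absolute constant C, where ‖ω‖²_X = ‖ω‖²_{L²} + ‖yω‖²_{L²}. Concretely one may take the chain: ‖u‖_{L²} ≤ √2‖yu‖^{1/2}_{L²}‖∂_y u‖^{1/2}_{L²}, with ‖∂_y u‖_{L²} ≤ ‖ω‖_{L²} and ‖yu‖_{L²} ≤ 3‖ω‖_{L²} + ‖yω‖_{L²}. -/

import Mathlib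

open MeasureTheory Real

/-- Partial derivative in the first (x) variable. -/
noncomputable def pdx (f : ℝ → ℝ → ℝ) (x y : ℝ) : ℝ := deriv (fun x' => f x' y) x

/-- Partial derivative in the second (y) variable. -/
noncomputable def pdy (f : ℝ → ℝ → ℝ) (x y : ℝ) : ℝ := deriv (fun y' => f x y') y

/-- Laplacian. -/
noncomputable def lap (f : ℝ → ℝ → ℝ) (x y : ℝ) : ℝ := pdx (pdx f) x y + pdy (pdy f) x y

/-- `f` and all its derivatives decay rapidly in `y`, uniformly in `x`. -/
def RapidDecay (f : ℝ → ℝ → ℝ) : Prop :=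
  ∀ k n : ℕ, ∃ C : ℝ, ∀ x y : ℝ,
    |y| ^ n * ‖iteratedFDeriv ℝ k (Function.uncurry f) (x, y)‖ ≤ C

/-- `f` is `2π`-periodic in `x` (i.e. lives on `𝕋 × ℝ`). -/
def PerX (f : ℝ → ℝ → ℝ) : Prop := ∀ y : ℝ, Function.Periodic (fun x => f x y) (2 * π)

/-- `f` has zero `x`-average. -/
def ZeroAvgX (f : ℝ → ℝ → ℝ) : Prop := ∀ y : ℝ, ∫ x in (0:ℝ)..(2 * π), f x y = 0

open Set Filter Topology Function intervalIntegral

namespace S14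


lemma hasDerivAt_pdx {f : ℝ → ℝ → ℝ} (hf : ContDiff ℝ (⊤ : ℕ∞) (uncurry f)) (x y : ℝ) :
    HasDerivAt (fun x' => f x' y) (pdx f x y) x := by
  have h : DifferentiableAt ℝ (fun x' => f x' y) x := by
    have : (fun x' => f x' y) = (uncurry f) ∘ (fun x' => (x', y)) := rfl
    rw [this]
    exact ((hf.differentiable (by simp)) (x, y)).comp x
      ((differentiableAt_id.prodMk (differentiableAt_const y)))
  exact h.hasDerivAt

lemma hasDerivAt_pdy {f : ℝ → ℝ → ℝ} (hf : ContDiff ℝ (⊤ : ℕ∞) (uncurry f)) (x y : ℝ) :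
    HasDerivAt (fun y' => f x y') (pdy f x y) y := by
  have h : DifferentiableAt ℝ (fun y' => f x y') y := by
    have : (fun y' => f x y') = (uncurry f) ∘ (fun y' => (x, y')) := rfl
    rw [this]
    exact ((hf.differentiable (by simp)) (x, y)).comp y
      (((differentiableAt_const x).prodMk differentiableAt_id))
  exact h.hasDerivAt

lemma pdx_eq_fderiv {f : ℝ → ℝ → ℝ} (hf : ContDiff ℝ (⊤ : ℕ∞) (uncurry f)) (x y : ℝ) :
    pdx f x y = fderiv ℝ (uncurry f) (x, y) (1, 0) := by
  have h : HasDerivAt (fun x' => uncurry f (x', y))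
      (fderiv ℝ (uncurry f) (x, y) ((1:ℝ), (0:ℝ))) x := by
    have h1 : HasDerivAt (fun x' : ℝ => (x', y)) ((1:ℝ), (0:ℝ)) x :=
      (hasDerivAt_id x).prodMk (hasDerivAt_const x y)
    exact (((hf.differentiable (by simp)) (x, y)).hasFDerivAt).comp_hasDerivAt x h1
  simpa [pdx, Function.uncurry] using h.deriv

lemma pdy_eq_fderiv {f : ℝ → ℝ → ℝ} (hf : ContDiff ℝ (⊤ : ℕ∞) (uncurry f)) (x y : ℝ) :
    pdy f x y = fderiv ℝ (uncurry f) (x, y) (0, 1) := by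
  have h : HasDerivAt (fun y' : ℝ => uncurry f (x, y'))
      (fderiv ℝ (uncurry f) (x, y) ((0:ℝ), (1:ℝ))) y := by
    have h1 : HasDerivAt (fun y' : ℝ => (x, y')) ((0:ℝ), (1:ℝ)) y :=
      (hasDerivAt_const y x).prodMk (hasDerivAt_id y)
    exact (((hf.differentiable (by simp)) (x, y)).hasFDerivAt).comp_hasDerivAt y h1
  simpa [pdy, Function.uncurry] using h.deriv

lemma contDiff_pdx {f : ℝ → ℝ → ℝ} (hf : ContDiff ℝ (⊤ : ℕ∞) (uncurry f)) :
    ContDiff ℝ (⊤ : ℕ∞) (uncurry (pdx f)) := by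
  have h : uncurry (pdx f) = fun p : ℝ × ℝ => fderiv ℝ (uncurry f) p (1, 0) := by
    funext p
    cases' p with x y
    exact pdx_eq_fderiv hf x y
  rw [h]
  exact (hf.fderiv_right (by simp)).clm_apply contDiff_const

lemma contDiff_pdy {f : ℝ → ℝ → ℝ} (hf : ContDiff ℝ (⊤ : ℕ∞) (uncurry f)) :
    ContDiff ℝ (⊤ : ℕ∞) (uncurry (pdy f)) := by
  have h : uncurry (pdy f) = fun p : ℝ × ℝ => fderiv ℝ (uncurry f) p (0, 1) := by
    funext p
    cases' p with x y
    exact pdy_eq_fderiv hf x y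
  rw [h]
  exact (hf.fderiv_right (by simp)).clm_apply contDiff_const




lemma ev_fderiv {f : ℝ → ℝ → ℝ} (hf : ContDiff ℝ (⊤ : ℕ∞) (uncurry f)) (v w : ℝ × ℝ) (x y : ℝ) :
    fderiv ℝ (fun p : ℝ × ℝ => fderiv ℝ (uncurry f) p v) (x, y) w
      = fderiv ℝ (fderiv ℝ (uncurry f)) (x, y) w v := by
  have h1 : HasFDerivAt (fderiv ℝ (uncurry f)) (fderiv ℝ (fderiv ℝ (uncurry f)) (x, y)) (x, y) :=
    (((hf.fderiv_right (m := (⊤ : ℕ∞)) (by simp)).differentiable (by simp)) (x, y)).hasFDerivAt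
  have h2 := h1.clm_apply (hasFDerivAt_const v ((x, y) : ℝ × ℝ))
  rw [h2.fderiv]
  simp

lemma pdx_pdx_eq {f : ℝ → ℝ → ℝ} (hf : ContDiff ℝ (⊤ : ℕ∞) (uncurry f)) (x y : ℝ) :
    pdx (pdx f) x y = iteratedFDeriv ℝ 2 (uncurry f) (x, y) ![(1, 0), (1, 0)] := by
  rw [iteratedFDeriv_two_apply]
  rw [pdx_eq_fderiv (contDiff_pdx hf) x y]
  have h : uncurry (pdx f) = fun p : ℝ × ℝ => fderiv ℝ (uncurry f) p (1, 0) := by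
    funext p; cases' p with a b; exact pdx_eq_fderiv hf a b
  rw [h, ev_fderiv hf]
  simp

lemma pdy_pdy_eq {f : ℝ → ℝ → ℝ} (hf : ContDiff ℝ (⊤ : ℕ∞) (uncurry f)) (x y : ℝ) :
    pdy (pdy f) x y = iteratedFDeriv ℝ 2 (uncurry f) (x, y) ![(0, 1), (0, 1)] := by
  rw [iteratedFDeriv_two_apply]
  rw [pdy_eq_fderiv (contDiff_pdy hf) x y]
  have h : uncurry (pdy f) = fun p : ℝ × ℝ => fderiv ℝ (uncurry f) p (0, 1) := by
    funext p; cases' p with a b; exact pdy_eq_fderiv hf a b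
  rw [h, ev_fderiv hf]
  simp

lemma abs_pdx_le {f : ℝ → ℝ → ℝ} (hf : ContDiff ℝ (⊤ : ℕ∞) (uncurry f)) (x y : ℝ) :
    |pdx f x y| ≤ ‖iteratedFDeriv ℝ 1 (uncurry f) (x, y)‖ := by
  rw [pdx_eq_fderiv hf]
  have h := (iteratedFDeriv ℝ 1 (uncurry f) (x, y)).le_opNorm ![((1:ℝ), (0:ℝ))]
  rw [iteratedFDeriv_one_apply] at h
  simpa [Prod.norm_def] using h

lemma abs_pdy_le {f : ℝ → ℝ → ℝ} (hf : ContDiff ℝ (⊤ : ℕ∞) (uncurry f)) (x y : ℝ) :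
    |pdy f x y| ≤ ‖iteratedFDeriv ℝ 1 (uncurry f) (x, y)‖ := by
  rw [pdy_eq_fderiv hf]
  have h := (iteratedFDeriv ℝ 1 (uncurry f) (x, y)).le_opNorm ![((0:ℝ), (1:ℝ))]
  rw [iteratedFDeriv_one_apply] at h
  simpa [Prod.norm_def] using h

lemma abs_pdx_pdx_le {f : ℝ → ℝ → ℝ} (hf : ContDiff ℝ (⊤ : ℕ∞) (uncurry f)) (x y : ℝ) :
    |pdx (pdx f) x y| ≤ ‖iteratedFDeriv ℝ 2 (uncurry f) (x, y)‖ := by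
  rw [pdx_pdx_eq hf]
  have h := (iteratedFDeriv ℝ 2 (uncurry f) (x, y)).le_opNorm ![((1:ℝ), (0:ℝ)), (1, 0)]
  simpa [Prod.norm_def, Fin.prod_univ_two] using h

lemma abs_pdy_pdy_le {f : ℝ → ℝ → ℝ} (hf : ContDiff ℝ (⊤ : ℕ∞) (uncurry f)) (x y : ℝ) :
    |pdy (pdy f) x y| ≤ ‖iteratedFDeriv ℝ 2 (uncurry f) (x, y)‖ := by
  rw [pdy_pdy_eq hf]
  have h := (iteratedFDeriv ℝ 2 (uncurry f) (x, y)).le_opNorm ![((0:ℝ), (1:ℝ)), (0, 1)]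
  simpa [Prod.norm_def, Fin.prod_univ_two] using h

lemma decay_bound {f : ℝ → ℝ → ℝ} (hd : RapidDecay f) (k : ℕ) :
    ∃ C : ℝ, ∀ x y : ℝ, (1 + y ^ 2) * ‖iteratedFDeriv ℝ k (uncurry f) (x, y)‖ ≤ C := by
  obtain ⟨C0, h0⟩ := hd k 0
  obtain ⟨C2, h2⟩ := hd k 2
  refine ⟨C0 + C2, fun x y => ?_⟩
  have a := h0 x y
  have b := h2 x y
  rw [pow_zero, one_mul] at a
  rw [sq_abs] at b
  nlinarith [norm_nonneg (iteratedFDeriv ℝ k (uncurry f) (x, y))]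

/-- Combined decay bound producer. -/
lemma decay_of_le {f : ℝ → ℝ → ℝ} (hd : RapidDecay f) {g : ℝ → ℝ → ℝ} (k : ℕ)
    (hle : ∀ x y, |g x y| ≤ ‖iteratedFDeriv ℝ k (uncurry f) (x, y)‖) :
    ∃ C : ℝ, 0 ≤ C ∧ ∀ x y : ℝ, (1 + y ^ 2) * |g x y| ≤ C := by
  obtain ⟨C, hC⟩ := decay_bound hd k
  have hC0 : 0 ≤ C := le_trans (by positivity) (hC 0 0)
  refine ⟨C, hC0, fun x y => ?_⟩
  exact le_trans (mul_le_mul_of_nonneg_left (hle x y) (by positivity)) (hC x y)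

lemma bound_f {f : ℝ → ℝ → ℝ} (hd : RapidDecay f) :
    ∃ C : ℝ, 0 ≤ C ∧ ∀ x y : ℝ, (1 + y ^ 2) * |f x y| ≤ C :=
  decay_of_le hd 0 (fun x y => by
    rw [norm_iteratedFDeriv_zero]
    simp [Function.uncurry, Real.norm_eq_abs])



lemma csIntegral {α : Type*} [MeasurableSpace α] {μ : Measure α} {f g : α → ℝ}
    (hf : AEStronglyMeasurable f μ) (hg : AEStronglyMeasurable g μ)
    (hf2 : Integrable (fun a => f a ^ 2) μ) (hg2 : Integrable (fun a => g a ^ 2) μ)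
    (hf0 : ∀ a, 0 ≤ f a) (hg0 : ∀ a, 0 ≤ g a) :
    ∫ a, f a * g a ∂μ ≤ Real.sqrt (∫ a, f a ^ 2 ∂μ) * Real.sqrt (∫ a, g a ^ 2 ∂μ) := by
  have hpq : Real.HolderConjugate 2 2 := Real.HolderConjugate.two_two
  have hfm : MemLp f (ENNReal.ofReal 2) μ := by
    rw [show (ENNReal.ofReal 2) = 2 by norm_num]
    exact (memLp_two_iff_integrable_sq hf).2 hf2
  have hgm : MemLp g (ENNReal.ofReal 2) μ := by
    rw [show (ENNReal.ofReal 2) = 2 by norm_num]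
    exact (memLp_two_iff_integrable_sq hg).2 hg2
  have h := integral_mul_le_Lp_mul_Lq_of_nonneg hpq (ae_of_all _ hf0) (ae_of_all _ hg0) hfm hgm
  have e1 : ∀ (h : α → ℝ), (∫ a, h a ^ (2:ℝ) ∂μ) = ∫ a, h a ^ 2 ∂μ := by
    intro h
    congr 1
    funext a
    rw [show (2:ℝ) = ((2:ℕ):ℝ) by norm_num, Real.rpow_natCast]
  rw [e1 f, e1 g] at h
  refine le_trans h (le_of_eq ?_)
  rw [← Real.sqrt_eq_rpow, ← Real.sqrt_eq_rpow]

lemma csInterval {f g : ℝ → ℝ} (hf : Continuous f) (hg : Continuous g)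
    (hf0 : ∀ x, 0 ≤ f x) (hg0 : ∀ x, 0 ≤ g x) :
    ∫ x in (0:ℝ)..(2 * π), f x * g x ≤
      Real.sqrt (∫ x in (0:ℝ)..(2 * π), f x ^ 2) *
      Real.sqrt (∫ x in (0:ℝ)..(2 * π), g x ^ 2) := by
  have h2π : (0:ℝ) ≤ 2 * π := by positivity
  rw [intervalIntegral.integral_of_le h2π, intervalIntegral.integral_of_le h2π,
    intervalIntegral.integral_of_le h2π]
  exact csIntegral (hf.aestronglyMeasurable.restrict) (hg.aestronglyMeasurable.restrict)
    ((hf.pow 2).integrableOn_Ioc) ((hg.pow 2).integrableOn_Ioc) hf0 hg0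

lemma neg_of_nonvanishing {f : ℝ → ℝ} {b : ℝ} (hb : 0 < b) (hfc : Continuous f)
    (hno : ∀ x ∈ Icc (0:ℝ) b, f x ≠ 0) (h0 : f 0 < 0) : (∫ x in (0:ℝ)..b, f x) < 0 := by
  have hall : ∀ x ∈ Icc (0:ℝ) b, f x < 0 := by
    intro x hx
    rcases lt_or_ge (f x) 0 with h | h
    · exact h
    exfalso
    have hsub : Icc (f 0) (f x) ⊆ f '' Icc 0 x :=
      intermediate_value_Icc hx.1 hfc.continuousOn
    have h0mem : (0:ℝ) ∈ Icc (f 0) (f x) := ⟨le_of_lt h0, h⟩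
    obtain ⟨c, hc, hfc0⟩ := hsub h0mem
    exact hno c ⟨hc.1, le_trans hc.2 hx.2⟩ hfc0
  have hpos : (0:ℝ) < ∫ x in (0:ℝ)..b, -f x := by
    apply intervalIntegral_pos_of_pos_on
    · exact (hfc.neg).intervalIntegrable 0 b
    · intro x hx
      have := hall x ⟨le_of_lt hx.1, le_of_lt hx.2⟩
      linarith
    · exact hb
  rw [intervalIntegral.integral_neg] at hpos
  linarith

lemma exists_zero {f : ℝ → ℝ} {b : ℝ} (hb : 0 < b) (hfc : Continuous f)
    (h0 : ∫ x in (0:ℝ)..b, f x = 0) : ∃ a ∈ Icc (0:ℝ) b, f a = 0 := by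
  by_contra hno
  push_neg at hno
  rcases (hno 0 ⟨le_refl 0, le_of_lt hb⟩).lt_or_gt with h | h
  · exact absurd h0 (ne_of_lt (neg_of_nonvanishing hb hfc hno h))
  · have := neg_of_nonvanishing hb hfc.neg (fun x hx => neg_ne_zero.2 (hno x hx)) (by simpa using h)
    simp only [Pi.neg_apply, intervalIntegral.integral_neg] at this
    exact absurd h0 (ne_of_gt (by linarith))

/-- Elementary Poincaré inequality on `[0, 2π]` for zero-average functions. -/
lemma poincare {f g : ℝ → ℝ} (hf : ∀ x, HasDerivAt f (g x) x) (hg : Continuous g)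
    (h0 : ∫ x in (0:ℝ)..(2 * π), f x = 0) :
    ∫ x in (0:ℝ)..(2 * π), (f x) ^ 2 ≤ (2 * π) ^ 2 * ∫ x in (0:ℝ)..(2 * π), (g x) ^ 2 := by
  have h2π : (0:ℝ) < 2 * π := by positivity
  have hfc : Continuous f := by
    rw [continuous_iff_continuousAt]; exact fun x => (hf x).continuousAt
  obtain ⟨a, ha, hfa⟩ := exists_zero h2π hfc h0
  set M := ∫ t in (0:ℝ)..(2 * π), |g t| with hM
  have hM0 : 0 ≤ M := intervalIntegral.integral_nonneg (le_of_lt h2π) (fun t _ => abs_nonneg _)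
  have key : ∀ x ∈ Icc (0:ℝ) (2 * π), |f x| ≤ M := by
    intro x hx
    have hfx : f x = ∫ t in a..x, g t := by
      rw [intervalIntegral.integral_eq_sub_of_hasDerivAt (fun t _ => hf t)
        (hg.intervalIntegrable a x), hfa, sub_zero]
    rw [hfx]
    have habs := intervalIntegral.norm_integral_le_abs_integral_norm
      (f := g) (a := a) (b := x) (μ := volume)
    simp only [Real.norm_eq_abs] at habs
    refine le_trans habs ?_
    rcases le_total a x with hax | hax
    · rw [abs_of_nonneg (intervalIntegral.integral_nonneg hax (fun t _ => abs_nonneg _))]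
      exact intervalIntegral.integral_mono_interval ha.1 hax hx.2
        (ae_of_all _ (fun t => abs_nonneg _)) ((hg.abs).intervalIntegrable 0 (2 * π))
    · rw [intervalIntegral.integral_symm, abs_neg,
        abs_of_nonneg (intervalIntegral.integral_nonneg hax (fun t _ => abs_nonneg _))]
      exact intervalIntegral.integral_mono_interval hx.1 hax ha.2
        (ae_of_all _ (fun t => abs_nonneg _)) ((hg.abs).intervalIntegrable 0 (2 * π))
  -- Cauchy-Schwarz: M ≤ √(∫g²)·√(2π)
  have hMsq : M ^ 2 ≤ (2 * π) * ∫ t in (0:ℝ)..(2 * π), (g t) ^ 2 := by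
    have hcs : M ≤ Real.sqrt (∫ t in (0:ℝ)..(2 * π), |g t| ^ 2) *
        Real.sqrt (∫ t in (0:ℝ)..(2 * π), (1:ℝ) ^ 2) := by
      have h := csInterval (f := fun t => |g t|) (g := fun _ => (1:ℝ))
        hg.abs continuous_const (fun t => abs_nonneg _) (fun t => zero_le_one)
      simpa using h
    have e1 : (∫ t in (0:ℝ)..(2 * π), |g t| ^ 2) = ∫ t in (0:ℝ)..(2 * π), (g t) ^ 2 := by
      congr 1; funext t; rw [sq_abs]
    have e2 : (∫ t in (0:ℝ)..(2 * π), (1:ℝ) ^ 2) = 2 * π := by simp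
    rw [e1, e2] at hcs
    have hgint0 : 0 ≤ ∫ t in (0:ℝ)..(2 * π), (g t) ^ 2 :=
      intervalIntegral.integral_nonneg (le_of_lt h2π) (fun t _ => sq_nonneg _)
    calc M ^ 2 ≤ (Real.sqrt (∫ t in (0:ℝ)..(2 * π), (g t) ^ 2) * Real.sqrt (2 * π)) ^ 2 := by
          apply pow_le_pow_left₀ hM0 hcs
      _ = (2 * π) * ∫ t in (0:ℝ)..(2 * π), (g t) ^ 2 := by
          rw [mul_pow, Real.sq_sqrt hgint0, Real.sq_sqrt (le_of_lt h2π)]; ring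
  calc ∫ x in (0:ℝ)..(2 * π), (f x) ^ 2
      ≤ ∫ _x in (0:ℝ)..(2 * π), M ^ 2 := by
        apply intervalIntegral.integral_mono_on (le_of_lt h2π)
          ((hfc.pow 2).intervalIntegrable 0 (2 * π)) intervalIntegrable_const
        intro x hx
        rw [Pi.pow_apply, ← sq_abs]
        exact pow_le_pow_left₀ (abs_nonneg _) (key x hx) 2
    _ = (2 * π) * M ^ 2 := by simp
    _ ≤ (2 * π) * ((2 * π) * ∫ t in (0:ℝ)..(2 * π), (g t) ^ 2) := by
        apply mul_le_mul_of_nonneg_left hMsq (le_of_lt h2π)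
    _ = (2 * π) ^ 2 * ∫ t in (0:ℝ)..(2 * π), (g t) ^ 2 := by ring



lemma contParam {g : ℝ → ℝ → ℝ} (hg : Continuous (uncurry g)) :
    Continuous fun y => ∫ x in (0:ℝ)..(2 * π), g x y := by
  apply intervalIntegral.continuous_parametric_intervalIntegral_of_continuous'
    (f := fun y x => g x y) (μ := volume) _ 0 (2 * π)
  have : uncurry (fun y x => g x y) = uncurry g ∘ Prod.swap := rfl
  rw [this]
  exact hg.comp continuous_swap

lemma intAbsBound {h : ℝ → ℝ} {c : ℝ} (hb : ∀ x, |h x| ≤ c) :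
    |∫ x in (0:ℝ)..(2 * π), h x| ≤ c * (2 * π) := by
  have := intervalIntegral.norm_integral_le_of_norm_le_const (C := c) (f := h)
    (a := 0) (b := 2 * π) (fun x _ => by simpa [Real.norm_eq_abs] using hb x)
  have hπ : |2 * π - 0| = 2 * π := by
    rw [sub_zero]; exact abs_of_nonneg (by positivity)
  rw [hπ] at this
  simpa [Real.norm_eq_abs] using this

lemma paramBound {h : ℝ → ℝ} {c y : ℝ} (hb : ∀ x, |h x| ≤ c * (1 + y ^ 2)⁻¹) :
    |∫ x in (0:ℝ)..(2 * π), h x| ≤ c * (2 * π) * (1 + y ^ 2)⁻¹ := by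
  have := intAbsBound hb
  rwa [mul_right_comm] at this

lemma integrable_of_bound {F : ℝ → ℝ} (hc : Continuous F) {c : ℝ}
    (hb : ∀ y, |F y| ≤ c * (1 + y ^ 2)⁻¹) : Integrable F :=
  (integrable_inv_one_add_sq.const_mul c).mono' hc.aestronglyMeasurable
    (ae_of_all _ fun y => by simpa [Real.norm_eq_abs] using hb y)

lemma mulBound {a b A B y : ℝ} (hA : (1 + y ^ 2) * |a| ≤ A) (hB : (1 + y ^ 2) * |b| ≤ B) :
    |a * b| ≤ A * B * (1 + y ^ 2)⁻¹ := by
  have h1 : (0:ℝ) < 1 + y ^ 2 := by positivity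
  have ha0 : 0 ≤ |a| := abs_nonneg a
  have hb0 : 0 ≤ |b| := abs_nonneg b
  have hA0 : 0 ≤ A := le_trans (by positivity) hA
  have hB0 : 0 ≤ B := le_trans (by positivity) hB
  rw [← div_eq_mul_inv, le_div_iff₀ h1, abs_mul]
  have hprod : ((1 + y ^ 2) * |a|) * ((1 + y ^ 2) * |b|) ≤ A * B :=
    mul_le_mul hA hB (by positivity) hA0
  have ht1 : (1:ℝ) ≤ 1 + y ^ 2 := by nlinarith [sq_nonneg y]
  nlinarith [mul_nonneg (mul_nonneg ha0 hb0) h1.le]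

lemma tendsto_bound_zero {F : ℝ → ℝ} {c : ℝ} (hb : ∀ y, |F y| ≤ c * (1 + y ^ 2)⁻¹) :
    Tendsto F atTop (𝓝 0) ∧ Tendsto F atBot (𝓝 0) := by
  have hsq_top : Tendsto (fun y : ℝ => 1 + y ^ 2) atTop atTop :=
    tendsto_atTop_add_const_left _ 1 (tendsto_pow_atTop (two_ne_zero))
  have hsq_bot : Tendsto (fun y : ℝ => 1 + y ^ 2) atBot atTop := by
    apply tendsto_atTop_add_const_left _ 1
    have h := (tendsto_pow_atTop (two_ne_zero) (α := ℝ)).comp tendsto_neg_atBot_atTop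
    have he : (fun x : ℝ => x ^ 2) ∘ Neg.neg = fun x : ℝ => x ^ 2 := by
      funext x; simp
    rwa [he] at h
  have hmaj : ∀ (l : Filter ℝ), Tendsto (fun y : ℝ => 1 + y ^ 2) l atTop →
      Tendsto F l (𝓝 0) := by
    intro l hl
    apply squeeze_zero_norm (fun y => hb y)
    have : Tendsto (fun y : ℝ => c * (1 + y ^ 2)⁻¹) l (𝓝 (c * 0)) :=
      (hl.inv_tendsto_atTop).const_mul c
    simpa using this
  exact ⟨hmaj _ hsq_top, hmaj _ hsq_bot⟩

lemma perX_pdx {f : ℝ → ℝ → ℝ} (hper : PerX f) : PerX (pdx f) := by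
  intro y x
  show deriv (fun x' => f x' y) (x + 2 * π) = deriv (fun x' => f x' y) x
  have h1 : deriv (fun x' => f (x' + 2 * π) y) x = deriv (fun x' => f x' y) (x + 2 * π) :=
    deriv_comp_add_const (fun x' => f x' y) (2 * π) x
  rw [← h1]
  congr 1
  funext x'
  exact hper y x'


end S14

open S14

/-- `‖u‖_{L²} ≤ C‖ω‖_X` for `u = ∇⊥Δ⁻¹ω`, `ω` with zero `x`-average, where
`‖ω‖²_X = ‖ω‖²_{L²} + ‖yω‖²_{L²}`; `C` is an absolute constant. -/
theorem stmt14 :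
    ∃ C : ℝ, 0 < C ∧ ∀ ω ψ : ℝ → ℝ → ℝ,
      ContDiff ℝ (⊤ : ℕ∞) (Function.uncurry ω) → PerX ω → RapidDecay ω → ZeroAvgX ω →
      ContDiff ℝ (⊤ : ℕ∞) (Function.uncurry ψ) → PerX ψ → RapidDecay ψ → ZeroAvgX ψ →
      (∀ x y, lap ψ x y = ω x y) →
      Real.sqrt (∫ y : ℝ, ∫ x in (0:ℝ)..(2 * π),
          (pdy ψ x y) ^ 2 + (pdx ψ x y) ^ 2) ≤
        C * Real.sqrt ((∫ y : ℝ, ∫ x in (0:ℝ)..(2 * π), (ω x y) ^ 2)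
          + (∫ y : ℝ, ∫ x in (0:ℝ)..(2 * π), (y * ω x y) ^ 2)) := by
  refine ⟨2 * π, by positivity, fun ω ψ hω hωper hωdec hωavg hψ hψper hψdec hψavg hlap => ?_⟩
  have h2π : (0:ℝ) < 2 * π := by positivity
  -- smoothness of derivatives
  have hψx : ContDiff ℝ (⊤ : ℕ∞) (uncurry (pdx ψ)) := contDiff_pdx hψ
  have hψy : ContDiff ℝ (⊤ : ℕ∞) (uncurry (pdy ψ)) := contDiff_pdy hψ
  have hψxx : ContDiff ℝ (⊤ : ℕ∞) (uncurry (pdx (pdx ψ))) := contDiff_pdx hψx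
  have hψyy : ContDiff ℝ (⊤ : ℕ∞) (uncurry (pdy (pdy ψ))) := contDiff_pdy hψy
  -- slice continuity
  have sliceX : ∀ {f : ℝ → ℝ → ℝ}, Continuous (uncurry f) → ∀ y, Continuous (fun x => f x y) :=
    fun hf y => hf.comp (continuous_id.prodMk continuous_const)
  -- decay constants
  obtain ⟨Ca, hCa0, hCa⟩ := bound_f hψdec
  obtain ⟨Cb, hCb0, hCb⟩ := decay_of_le hψdec 1 (abs_pdx_le hψ)
  obtain ⟨Cc, hCc0, hCc⟩ := decay_of_le hψdec 1 (abs_pdy_le hψ)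
  obtain ⟨Ce, hCe0, hCe⟩ := decay_of_le hψdec 2 (abs_pdy_pdy_le hψ)
  obtain ⟨Cw, hCw0, hCw⟩ := bound_f hωdec
  -- named integrals
  set E : ℝ → ℝ := fun y => ∫ x in (0:ℝ)..(2 * π), ((pdy ψ x y) ^ 2 + (pdx ψ x y) ^ 2)
    with hEdef
  set K : ℝ → ℝ := fun y => ∫ x in (0:ℝ)..(2 * π), (ψ x y) ^ 2 with hKdef
  set W : ℝ → ℝ := fun y => ∫ x in (0:ℝ)..(2 * π), (ω x y) ^ 2 with hWdef
  set P : ℝ → ℝ := fun y => ∫ x in (0:ℝ)..(2 * π), ψ x y * ω x y with hPdef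
  set D : ℝ → ℝ := fun y => ∫ x in (0:ℝ)..(2 * π),
    ((pdy ψ x y) ^ 2 + ψ x y * pdy (pdy ψ) x y) with hDdef
  set G : ℝ → ℝ := fun y => ∫ x in (0:ℝ)..(2 * π), ψ x y * pdy ψ x y with hGdef
  -- continuity of parametric integrals
  have hEc : Continuous E := contParam (by
    exact ((hψy.continuous.pow 2).add (hψx.continuous.pow 2)))
  have hKc : Continuous K := contParam (by exact hψ.continuous.pow 2)
  have hWc : Continuous W := contParam (by exact hω.continuous.pow 2)
  have hPc : Continuous P := contParam (by exact hψ.continuous.mul hω.continuous)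
  have hDc : Continuous D := contParam (by
    exact ((hψy.continuous.pow 2).add (hψ.continuous.mul hψyy.continuous)))
  -- decay bounds on parametric integrals
  have hKb : ∀ y, |K y| ≤ Ca * Ca * (2 * π) * (1 + y ^ 2)⁻¹ := fun y =>
    paramBound (fun x => by simpa [pow_two] using mulBound (hCa x y) (hCa x y))
  have hWb : ∀ y, |W y| ≤ Cw * Cw * (2 * π) * (1 + y ^ 2)⁻¹ := fun y =>
    paramBound (fun x => by simpa [pow_two] using mulBound (hCw x y) (hCw x y))
  have hPb : ∀ y, |P y| ≤ Ca * Cw * (2 * π) * (1 + y ^ 2)⁻¹ := fun y =>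
    paramBound (fun x => mulBound (hCa x y) (hCw x y))
  have hGb : ∀ y, |G y| ≤ Ca * Cc * (2 * π) * (1 + y ^ 2)⁻¹ := fun y =>
    paramBound (fun x => mulBound (hCa x y) (hCc x y))
  have hDb : ∀ y, |D y| ≤ (Cc * Cc + Ca * Ce) * (2 * π) * (1 + y ^ 2)⁻¹ := fun y =>
    paramBound (fun x => by
      have h1 := mulBound (hCc x y) (hCc x y)
      have h2 := mulBound (hCa x y) (hCe x y)
      calc |(pdy ψ x y) ^ 2 + ψ x y * pdy (pdy ψ) x y|
          ≤ |(pdy ψ x y) ^ 2| + |ψ x y * pdy (pdy ψ) x y| := abs_add_le _ _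
        _ ≤ Cc * Cc * (1 + y ^ 2)⁻¹ + Ca * Ce * (1 + y ^ 2)⁻¹ := by
            rw [pow_two]; exact add_le_add h1 h2
        _ = (Cc * Cc + Ca * Ce) * (1 + y ^ 2)⁻¹ := by ring)
  have hEb : ∀ y, |E y| ≤ (Cc * Cc + Cb * Cb) * (2 * π) * (1 + y ^ 2)⁻¹ := fun y =>
    paramBound (fun x => by
      have h1 := mulBound (hCc x y) (hCc x y)
      have h2 := mulBound (hCb x y) (hCb x y)
      calc |(pdy ψ x y) ^ 2 + (pdx ψ x y) ^ 2|
          ≤ |(pdy ψ x y) ^ 2| + |(pdx ψ x y) ^ 2| := abs_add_le _ _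
        _ ≤ Cc * Cc * (1 + y ^ 2)⁻¹ + Cb * Cb * (1 + y ^ 2)⁻¹ := by
            rw [pow_two, pow_two]; exact add_le_add h1 h2
        _ = (Cc * Cc + Cb * Cb) * (1 + y ^ 2)⁻¹ := by ring)
  -- integrability over ℝ
  have hKint : Integrable K := integrable_of_bound hKc hKb
  have hWint : Integrable W := integrable_of_bound hWc hWb
  have hPint : Integrable P := integrable_of_bound hPc hPb
  have hDint : Integrable D := integrable_of_bound hDc hDb
  have hEint : Integrable E := integrable_of_bound hEc hEb
  -- x-integration by parts (Step A)
  have stepA : ∀ y, (∫ x in (0:ℝ)..(2 * π), (pdx ψ x y) ^ 2)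
      = -∫ x in (0:ℝ)..(2 * π), ψ x y * pdx (pdx ψ) x y := by
    intro y
    have hper0 : ψ (2 * π) y = ψ 0 y := by simpa using hψper y 0
    have hper1 : pdx ψ (2 * π) y = pdx ψ 0 y := by simpa using perX_pdx hψper y 0
    have hderiv : ∀ x : ℝ, HasDerivAt (fun x' => ψ x' y * pdx ψ x' y)
        (pdx ψ x y * pdx ψ x y + ψ x y * pdx (pdx ψ) x y) x :=
      fun x => (hasDerivAt_pdx hψ x y).mul (hasDerivAt_pdx hψx x y)
    have hc1 : Continuous (fun x => pdx ψ x y * pdx ψ x y) :=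
      (sliceX hψx.continuous y).mul (sliceX hψx.continuous y)
    have hc2 : Continuous (fun x => ψ x y * pdx (pdx ψ) x y) :=
      (sliceX hψ.continuous y).mul (sliceX hψxx.continuous y)
    have hib := intervalIntegral.integral_eq_sub_of_hasDerivAt
      (f := fun x' => ψ x' y * pdx ψ x' y) (fun x _ => hderiv x)
      ((hc1.add hc2).intervalIntegrable 0 (2 * π))
    simp only [hper0, hper1, sub_self] at hib
    rw [intervalIntegral.integral_add (hc1.intervalIntegrable 0 (2 * π))
      (hc2.intervalIntegrable 0 (2 * π))] at hib
    have hconv : (∫ x in (0:ℝ)..(2 * π), (pdx ψ x y) ^ 2)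
        = ∫ x in (0:ℝ)..(2 * π), pdx ψ x y * pdx ψ x y := by
      congr 1; funext x; rw [pow_two]
    rw [hconv]
    linarith
  -- lap identity
  have hlapP : ∀ y, P y = (∫ x in (0:ℝ)..(2 * π), ψ x y * pdx (pdx ψ) x y)
      + ∫ x in (0:ℝ)..(2 * π), ψ x y * pdy (pdy ψ) x y := by
    intro y
    have h1 : ∀ x : ℝ, ψ x y * ω x y
        = ψ x y * pdx (pdx ψ) x y + ψ x y * pdy (pdy ψ) x y := by
      intro x; rw [← hlap x y]; simp [lap, mul_add]
    have hi1 : IntervalIntegrable (fun x => ψ x y * pdx (pdx ψ) x y) volume 0 (2 * π) :=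
      ((sliceX hψ.continuous y).mul (sliceX hψxx.continuous y)).intervalIntegrable 0 (2 * π)
    have hi2 : IntervalIntegrable (fun x => ψ x y * pdy (pdy ψ) x y) volume 0 (2 * π) :=
      ((sliceX hψ.continuous y).mul (sliceX hψyy.continuous y)).intervalIntegrable 0 (2 * π)
    calc P y = ∫ x in (0:ℝ)..(2 * π),
          (ψ x y * pdx (pdx ψ) x y + ψ x y * pdy (pdy ψ) x y) :=
        intervalIntegral.integral_congr (fun x _ => h1 x)
      _ = _ := intervalIntegral.integral_add hi1 hi2
  -- E = D - P
  have hEDP : ∀ y, E y = D y - P y := by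
    intro y
    have hi_yy : IntervalIntegrable (fun x => (pdy ψ x y) ^ 2) volume 0 (2 * π) :=
      ((sliceX hψy.continuous y).pow 2).intervalIntegrable 0 (2 * π)
    have hi_xx : IntervalIntegrable (fun x => (pdx ψ x y) ^ 2) volume 0 (2 * π) :=
      ((sliceX hψx.continuous y).pow 2).intervalIntegrable 0 (2 * π)
    have hi_pyy : IntervalIntegrable (fun x => ψ x y * pdy (pdy ψ) x y) volume 0 (2 * π) :=
      ((sliceX hψ.continuous y).mul (sliceX hψyy.continuous y)).intervalIntegrable 0 (2 * π)
    have e1 : E y = (∫ x in (0:ℝ)..(2 * π), (pdy ψ x y) ^ 2)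
        + ∫ x in (0:ℝ)..(2 * π), (pdx ψ x y) ^ 2 :=
      intervalIntegral.integral_add hi_yy hi_xx
    have e2 : D y = (∫ x in (0:ℝ)..(2 * π), (pdy ψ x y) ^ 2)
        + ∫ x in (0:ℝ)..(2 * π), ψ x y * pdy (pdy ψ) x y :=
      intervalIntegral.integral_add hi_yy hi_pyy
    have e3 := stepA y
    have e4 := hlapP y
    linarith
  -- derivative of G is D
  have hGd : ∀ y₀, HasDerivAt G (D y₀) y₀ := by
    intro y₀
    have hmeas : ∀ᶠ y in 𝓝 y₀, AEStronglyMeasurable (fun x => ψ x y * pdy ψ x y)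
        (volume.restrict (Set.uIoc (0:ℝ) (2 * π))) :=
      Eventually.of_forall (fun y =>
        ((sliceX hψ.continuous y).mul (sliceX hψy.continuous y)).aestronglyMeasurable)
    have hint : IntervalIntegrable (fun x => ψ x y₀ * pdy ψ x y₀) volume 0 (2 * π) :=
      ((sliceX hψ.continuous y₀).mul (sliceX hψy.continuous y₀)).intervalIntegrable 0 (2 * π)
    have hmeas' : AEStronglyMeasurable
        (fun x => (pdy ψ x y₀) ^ 2 + ψ x y₀ * pdy (pdy ψ) x y₀)
        (volume.restrict (Set.uIoc (0:ℝ) (2 * π))) :=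
      (((sliceX hψy.continuous y₀).pow 2).add
        ((sliceX hψ.continuous y₀).mul (sliceX hψyy.continuous y₀))).aestronglyMeasurable
    have hbound : ∀ᵐ x ∂(volume : Measure ℝ), x ∈ Set.uIoc (0:ℝ) (2 * π) →
        ∀ y ∈ Metric.ball y₀ 1,
        ‖(pdy ψ x y) ^ 2 + ψ x y * pdy (pdy ψ) x y‖ ≤ Cc * Cc + Ca * Ce := by
      apply ae_of_all
      intro x _ y _
      have h1 := mulBound (hCc x y) (hCc x y)
      have h2 := mulBound (hCa x y) (hCe x y)
      have hone : (1:ℝ) ≤ 1 + y ^ 2 := by nlinarith [sq_nonneg y]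
      have hinv : (1 + y ^ 2)⁻¹ ≤ 1 := by
        rw [inv_le_one_iff₀]; right; exact hone
      have h3 := mul_le_mul_of_nonneg_left hinv (mul_nonneg hCc0 hCc0)
      have h4 := mul_le_mul_of_nonneg_left hinv (mul_nonneg hCa0 hCe0)
      calc ‖(pdy ψ x y) ^ 2 + ψ x y * pdy (pdy ψ) x y‖
          = |(pdy ψ x y) ^ 2 + ψ x y * pdy (pdy ψ) x y| := rfl
        _ ≤ |(pdy ψ x y) ^ 2| + |ψ x y * pdy (pdy ψ) x y| := abs_add_le _ _
        _ ≤ Cc * Cc * (1 + y ^ 2)⁻¹ + Ca * Ce * (1 + y ^ 2)⁻¹ := by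
            rw [pow_two]; exact add_le_add h1 h2
        _ ≤ Cc * Cc + Ca * Ce := by nlinarith
    have hdiff : ∀ᵐ x ∂(volume : Measure ℝ), x ∈ Set.uIoc (0:ℝ) (2 * π) →
        ∀ y ∈ Metric.ball y₀ 1,
        HasDerivAt (fun y' => ψ x y' * pdy ψ x y')
          ((pdy ψ x y) ^ 2 + ψ x y * pdy (pdy ψ) x y) y := by
      apply ae_of_all
      intro x _ y _
      have := (hasDerivAt_pdy hψ x y).mul (hasDerivAt_pdy hψy x y)
      have hcv : pdy ψ x y * pdy ψ x y + ψ x y * pdy (pdy ψ) x y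
          = (pdy ψ x y) ^ 2 + ψ x y * pdy (pdy ψ) x y := by rw [pow_two]
      rwa [hcv] at this
    have hmain := intervalIntegral.hasDerivAt_integral_of_dominated_loc_of_deriv_le
      (F := fun y x => ψ x y * pdy ψ x y)
      (F' := fun y x => (pdy ψ x y) ^ 2 + ψ x y * pdy (pdy ψ) x y)
      (bound := fun _ => Cc * Cc + Ca * Ce)
      (Metric.ball_mem_nhds y₀ zero_lt_one) hmeas hint hmeas' hbound intervalIntegrable_const hdiff
    exact hmain.2
  -- ∫ D = 0
  have hDzero : ∫ y : ℝ, D y = 0 := by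
    obtain ⟨htop, hbot⟩ := tendsto_bound_zero hGb
    have h1 : ∫ y in Ioi (0:ℝ), D y = 0 - G 0 :=
      integral_Ioi_of_hasDerivAt_of_tendsto' (fun y _ => hGd y) hDint.integrableOn htop
    have h2 : ∫ y in Iic (0:ℝ), D y = G 0 - 0 :=
      integral_Iic_of_hasDerivAt_of_tendsto' (fun y _ => hGd y) hDint.integrableOn hbot
    rw [← integral_Iic_add_Ioi hDint.integrableOn hDint.integrableOn, h1, h2]
    ring
  -- A = -∫ P
  have hAeq : ∫ y : ℝ, E y = - ∫ y : ℝ, P y := by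
    have h1 : ∫ y : ℝ, E y = ∫ y : ℝ, (D y - P y) := by
      congr 1; funext y; exact hEDP y
    rw [h1, integral_sub hDint hPint, hDzero]
    ring
  have hEnn : ∀ y, 0 ≤ E y := fun y =>
    intervalIntegral.integral_nonneg (le_of_lt h2π) (fun x _ => by positivity)
  have hKnn : ∀ y, 0 ≤ K y := fun y =>
    intervalIntegral.integral_nonneg (le_of_lt h2π) (fun x _ => sq_nonneg _)
  have hWnn : ∀ y, 0 ≤ W y := fun y =>
    intervalIntegral.integral_nonneg (le_of_lt h2π) (fun x _ => sq_nonneg _)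
  have hA0 : 0 ≤ ∫ y : ℝ, E y := integral_nonneg hEnn
  have hT0 : 0 ≤ ∫ y : ℝ, K y := integral_nonneg hKnn
  have hB0 : 0 ≤ ∫ y : ℝ, W y := integral_nonneg hWnn
  -- pointwise Cauchy-Schwarz in x
  have hPcs : ∀ y, |P y| ≤ Real.sqrt (K y) * Real.sqrt (W y) := by
    intro y
    have habs := intervalIntegral.norm_integral_le_abs_integral_norm
      (f := fun x => ψ x y * ω x y) (a := (0:ℝ)) (b := 2 * π) (μ := volume)
    simp only [Real.norm_eq_abs] at habs
    have hnn : 0 ≤ ∫ x in (0:ℝ)..(2 * π), |ψ x y * ω x y| :=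
      intervalIntegral.integral_nonneg (le_of_lt h2π) (fun x _ => abs_nonneg _)
    rw [abs_of_nonneg hnn] at habs
    have hcs := csInterval (f := fun x => |ψ x y|) (g := fun x => |ω x y|)
      (sliceX hψ.continuous y).abs (sliceX hω.continuous y).abs
      (fun x => abs_nonneg _) (fun x => abs_nonneg _)
    have e1 : (∫ x in (0:ℝ)..(2 * π), |ψ x y| * |ω x y|)
        = ∫ x in (0:ℝ)..(2 * π), |ψ x y * ω x y| := by
      congr 1; funext x; rw [abs_mul]
    have e2 : (∫ x in (0:ℝ)..(2 * π), |ψ x y| ^ 2) = K y := by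
      rw [hKdef]; congr 1; funext x; rw [sq_abs]
    have e3 : (∫ x in (0:ℝ)..(2 * π), |ω x y| ^ 2) = W y := by
      rw [hWdef]; congr 1; funext x; rw [sq_abs]
    rw [e1, e2, e3] at hcs
    exact le_trans habs hcs
  -- integrability of √K·√W
  have hsqKW : Integrable (fun y => Real.sqrt (K y) * Real.sqrt (W y)) := by
    apply integrable_of_bound
      ((Real.continuous_sqrt.comp hKc).mul (Real.continuous_sqrt.comp hWc))
      (c := Real.sqrt (Ca * Ca * (2 * π)) * Real.sqrt (Cw * Cw * (2 * π)))
    intro y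
    have h1 : K y ≤ Ca * Ca * (2 * π) * (1 + y ^ 2)⁻¹ := le_trans (le_abs_self _) (hKb y)
    have h2 : W y ≤ Cw * Cw * (2 * π) * (1 + y ^ 2)⁻¹ := le_trans (le_abs_self _) (hWb y)
    have hinv0 : (0:ℝ) ≤ (1 + y ^ 2)⁻¹ := by positivity
    have hnn : 0 ≤ Real.sqrt (K y) * Real.sqrt (W y) := by positivity
    show |Real.sqrt (K y) * Real.sqrt (W y)|
      ≤ Real.sqrt (Ca * Ca * (2 * π)) * Real.sqrt (Cw * Cw * (2 * π)) * (1 + y ^ 2)⁻¹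
    rw [abs_of_nonneg hnn]
    calc Real.sqrt (K y) * Real.sqrt (W y)
        ≤ Real.sqrt (Ca * Ca * (2 * π) * (1 + y ^ 2)⁻¹)
          * Real.sqrt (Cw * Cw * (2 * π) * (1 + y ^ 2)⁻¹) :=
          mul_le_mul (Real.sqrt_le_sqrt h1) (Real.sqrt_le_sqrt h2)
            (Real.sqrt_nonneg _) (Real.sqrt_nonneg _)
      _ = Real.sqrt (Ca * Ca * (2 * π)) * Real.sqrt (Cw * Cw * (2 * π))
          * (1 + y ^ 2)⁻¹ := by
          rw [Real.sqrt_mul (by positivity : (0:ℝ) ≤ Ca * Ca * (2 * π)),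
            Real.sqrt_mul (by positivity : (0:ℝ) ≤ Cw * Cw * (2 * π)),
            mul_mul_mul_comm, Real.mul_self_sqrt hinv0]
  -- Cauchy-Schwarz in y
  have hcs2 : ∫ y : ℝ, Real.sqrt (K y) * Real.sqrt (W y)
      ≤ Real.sqrt (∫ y : ℝ, K y) * Real.sqrt (∫ y : ℝ, W y) := by
    have hKm : AEStronglyMeasurable (fun y => Real.sqrt (K y)) volume :=
      (Real.continuous_sqrt.comp hKc).aestronglyMeasurable
    have hWm : AEStronglyMeasurable (fun y => Real.sqrt (W y)) volume :=
      (Real.continuous_sqrt.comp hWc).aestronglyMeasurable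
    have eK : (fun y => Real.sqrt (K y) ^ 2) = K := funext fun y => Real.sq_sqrt (hKnn y)
    have eW : (fun y => Real.sqrt (W y) ^ 2) = W := funext fun y => Real.sq_sqrt (hWnn y)
    have hK2 : Integrable (fun y => Real.sqrt (K y) ^ 2) := by rw [eK]; exact hKint
    have hW2 : Integrable (fun y => Real.sqrt (W y) ^ 2) := by rw [eW]; exact hWint
    have h := csIntegral hKm hWm hK2 hW2
      (fun y => Real.sqrt_nonneg _) (fun y => Real.sqrt_nonneg _)
    have e1 : (∫ y : ℝ, Real.sqrt (K y) ^ 2) = ∫ y : ℝ, K y := by rw [eK]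
    have e2 : (∫ y : ℝ, Real.sqrt (W y) ^ 2) = ∫ y : ℝ, W y := by rw [eW]
    rwa [e1, e2] at h
  -- main estimate: A ≤ √(∫K)·√(∫W)
  have hmain : ∫ y : ℝ, E y ≤ Real.sqrt (∫ y : ℝ, K y) * Real.sqrt (∫ y : ℝ, W y) := by
    rw [hAeq]
    calc - ∫ y : ℝ, P y = ∫ y : ℝ, (- P y) := (MeasureTheory.integral_neg _).symm
      _ ≤ ∫ y : ℝ, Real.sqrt (K y) * Real.sqrt (W y) := by
          apply integral_mono hPint.neg hsqKW
          intro y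
          exact le_trans (neg_le_abs _) (hPcs y)
      _ ≤ _ := hcs2
  -- Poincaré: ∫K ≤ (2π)² ∫E
  have hpoinc : ∫ y : ℝ, K y ≤ (2 * π) ^ 2 * ∫ y : ℝ, E y := by
    have hpt : ∀ y, K y ≤ (2 * π) ^ 2 * E y := by
      intro y
      have hp := poincare (f := fun x => ψ x y) (g := fun x => pdx ψ x y)
        (fun x => hasDerivAt_pdx hψ x y) (sliceX hψx.continuous y) (hψavg y)
      have hi_yy : IntervalIntegrable (fun x => (pdy ψ x y) ^ 2) volume 0 (2 * π) :=
        ((sliceX hψy.continuous y).pow 2).intervalIntegrable 0 (2 * π)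
      have hi_xx : IntervalIntegrable (fun x => (pdx ψ x y) ^ 2) volume 0 (2 * π) :=
        ((sliceX hψx.continuous y).pow 2).intervalIntegrable 0 (2 * π)
      have hsplit : E y = (∫ x in (0:ℝ)..(2 * π), (pdy ψ x y) ^ 2)
          + ∫ x in (0:ℝ)..(2 * π), (pdx ψ x y) ^ 2 :=
        intervalIntegral.integral_add hi_yy hi_xx
      have hnn : 0 ≤ ∫ x in (0:ℝ)..(2 * π), (pdy ψ x y) ^ 2 :=
        intervalIntegral.integral_nonneg (le_of_lt h2π) (fun x _ => sq_nonneg _)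
      nlinarith [sq_nonneg (2 * π)]
    calc ∫ y : ℝ, K y ≤ ∫ y : ℝ, (2 * π) ^ 2 * E y :=
        integral_mono hKint (hEint.const_mul _) hpt
      _ = (2 * π) ^ 2 * ∫ y : ℝ, E y := MeasureTheory.integral_const_mul _ _
  -- wrap up
  have hsqrtK : Real.sqrt (∫ y : ℝ, K y) ≤ (2 * π) * Real.sqrt (∫ y : ℝ, E y) := by
    calc Real.sqrt (∫ y : ℝ, K y) ≤ Real.sqrt ((2 * π) ^ 2 * ∫ y : ℝ, E y) :=
          Real.sqrt_le_sqrt hpoinc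
      _ = (2 * π) * Real.sqrt (∫ y : ℝ, E y) := by
          rw [Real.sqrt_mul (sq_nonneg _), Real.sqrt_sq (le_of_lt h2π)]
  have key : Real.sqrt (∫ y : ℝ, E y) ≤ (2 * π) * Real.sqrt (∫ y : ℝ, W y) := by
    set s := Real.sqrt (∫ y : ℝ, E y) with hs
    have hss : s * s = ∫ y : ℝ, E y := Real.mul_self_sqrt hA0
    have hs0 : 0 ≤ s := Real.sqrt_nonneg _
    rcases eq_or_lt_of_le hs0 with h | h
    · rw [← h]; positivity
    · have h1 : s * s ≤ ((2 * π) * Real.sqrt (∫ y : ℝ, W y)) * s := by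
        rw [hss]
        calc ∫ y : ℝ, E y ≤ Real.sqrt (∫ y : ℝ, K y) * Real.sqrt (∫ y : ℝ, W y) := hmain
          _ ≤ ((2 * π) * s) * Real.sqrt (∫ y : ℝ, W y) :=
              mul_le_mul_of_nonneg_right hsqrtK (Real.sqrt_nonneg _)
          _ = ((2 * π) * Real.sqrt (∫ y : ℝ, W y)) * s := by ring
      exact le_of_mul_le_mul_right h1 h
  have hyω : 0 ≤ ∫ y : ℝ, ∫ x in (0:ℝ)..(2 * π), (y * ω x y) ^ 2 :=
    integral_nonneg (fun y =>
      intervalIntegral.integral_nonneg (le_of_lt h2π) (fun x _ => sq_nonneg _))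
  calc Real.sqrt (∫ y : ℝ, E y) ≤ (2 * π) * Real.sqrt (∫ y : ℝ, W y) := key
    _ ≤ (2 * π) * Real.sqrt ((∫ y : ℝ, W y)
        + ∫ y : ℝ, ∫ x in (0:ℝ)..(2 * π), (y * ω x y) ^ 2) := by
        apply mul_le_mul_of_nonneg_left _ (le_of_lt h2π)
        exact Real.sqrt_le_sqrt (le_add_of_nonneg_right hyω)
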